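/- arXiv:1301.5674 — 2 statements merged into one kernel-verified Lean document; each statement's English description precedes it below -/
import Mathlib

section
/- Let k ≥ 2 be an integer and l an integer. Then there exist integers k' and l' with 1 ≤ k' ≤ k/2 and |k'·l - l'·k| ≤ 2. -/
theorem stmt_5 (k l : ℤ) (hk : 2 ≤ k) :
    ∃ k' l' : ℤ, 1 ≤ k' ∧ 2 * k' ≤ k ∧ |k' * l - l' * k| ≤ 2 := by
  set n : ℕ := (k / 2).toNat with hn
  have hn1 : 1 ≤ (n : ℤ) := by
    rw [hn, Int.toNat_of_nonneg (by omega)]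
    omega
  have n_pos : 0 < n := by exact_mod_cast hn1
  obtain ⟨j, q, hq0, hqn, h⟩ := Real.exists_int_int_abs_mul_sub_le ((l : ℝ) / k) n_pos
  have hk0 : (0 : ℝ) < (k : ℝ) := by exact_mod_cast (by omega : (0:ℤ) < k)
  have hnk : (k : ℝ) ≤ 2 * ((n : ℝ) + 1) := by
    have : k ≤ 2 * ((n : ℤ) + 1) := by
      rw [hn, Int.toNat_of_nonneg (by omega)]; omega
    exact_mod_cast this
  refine ⟨q, j, hq0, ?_, ?_⟩
  · have hqn' : q ≤ (n : ℤ) := hqn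
    have : (n : ℤ) ≤ k / 2 := by rw [hn, Int.toNat_of_nonneg (by omega)]
    omega
  · have h2 : |(q : ℝ) * l - j * k| ≤ 2 := by
      have heq : ((q : ℝ) * ((l : ℝ) / k) - j) * k = (q : ℝ) * l - j * k := by
        field_simp
      calc |(q : ℝ) * l - j * k| = |(q : ℝ) * ((l : ℝ) / k) - j| * k := by
              rw [← heq, abs_mul, abs_of_pos hk0]
        _ ≤ 1 / ((n : ℝ) + 1) * k := mul_le_mul_of_nonneg_right h hk0.le
        _ ≤ 2 := by
              rw [div_mul_eq_mul_div, one_mul, div_le_iff₀ (by positivity)]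
              linarith
    have : |(q : ℤ) * l - j * k| ≤ 2 := by exact_mod_cast (by push_cast at h2 ⊢; exact h2 : |((q * l - j * k : ℤ) : ℝ)| ≤ 2)
    exact this
end

section
/- In ℂ_p with its standard absolute value, the only root of unity ζ satisfying |ζ - 1| < p^{-1/(p-1)} is ζ = 1. -/
section Aux

variable {K : Type*} [Field K] (abv : AbsoluteValue K ℝ)

lemma aux_nat_le_one (hna : IsNonarchimedean (abv : K → ℝ)) (n : ℕ) : abv (n : K) ≤ 1 := by
  induction n with
  | zero => simp
  | succ n ih =>
    push_cast
    exact le_trans (hna _ _) (max_le ih (le_of_eq abv.map_one))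

lemma aux_int_le_one (hna : IsNonarchimedean (abv : K → ℝ)) (a : ℤ) : abv (a : K) ≤ 1 := by
  obtain ⟨n, rfl | rfl⟩ := a.eq_nat_or_neg
  · exact_mod_cast aux_nat_le_one abv hna n
  · push_cast
    rw [abv.map_neg]
    exact aux_nat_le_one abv hna n

lemma aux_sum_le (hna : IsNonarchimedean (abv : K → ℝ)) {β : Type*} (s : Finset β) (f : β → K)
    {c : ℝ} (hc : 0 ≤ c) (h : ∀ i ∈ s, abv (f i) ≤ c) : abv (∑ i ∈ s, f i) ≤ c := by
  induction s using Finset.cons_induction with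
  | empty => simpa using hc
  | cons a s ha ih =>
    rw [Finset.sum_cons]
    exact le_trans (hna _ _)
      (max_le (h a (Finset.mem_cons_self a s)) (ih fun i hi => h i (Finset.mem_cons_of_mem hi)))

lemma aux_abv_le_one (hna : IsNonarchimedean (abv : K → ℝ)) {x : K} (hx : abv (x - 1) ≤ 1) :
    abv x ≤ 1 := by
  have := hna (x - 1) 1
  simpa [abv.map_one, hx] using le_trans (le_of_eq (by ring_nf : abv x = abv (x - 1 + 1))) this

lemma aux_pow_sub_one (hna : IsNonarchimedean (abv : K → ℝ)) {x : K} (hx : abv (x - 1) ≤ 1)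
    (j : ℕ) : abv (x ^ j - 1) ≤ abv (x - 1) := by
  induction j with
  | zero => simp
  | succ j ih =>
    have h1 : x ^ (j + 1) - 1 = x ^ j * (x - 1) + (x ^ j - 1) := by ring
    rw [h1]
    refine le_trans (hna _ _) (max_le ?_ ih)
    rw [abv.map_mul, abv.map_pow]
    exact mul_le_of_le_one_left (abv.nonneg _)
      (pow_le_one₀ (abv.nonneg _) (aux_abv_le_one abv hna hx))

/-- The prime-to-`p` case: an `m`-th root of unity with `m` coprime to `p`
which is at distance `< 1` from `1` equals `1`. -/
lemma aux_coprime_case (hna : IsNonarchimedean (abv : K → ℝ)) {p : ℕ} (hp : p.Prime)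
    (hpabs : abv (p : K) = 1 / p) {m : ℕ} (hm : ¬ p ∣ m) {ζ : K} (hζ : ζ ^ m = 1)
    (hlt : abv (ζ - 1) < 1) : ζ = 1 := by
  have hp1 : (1 : ℝ) < p := by exact_mod_cast hp.one_lt
  -- `abv m = 1`
  have hcop : Nat.Coprime m p := Nat.Coprime.symm ((Nat.Prime.coprime_iff_not_dvd hp).mpr hm)
  obtain ⟨a, b, hab⟩ := Nat.isCoprime_iff_coprime.mpr hcop
  have habK : (a : K) * (m : K) + (b : K) * (p : K) = 1 := by
    have := congrArg (fun z : ℤ => (z : K)) hab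
    push_cast at this
    exact this
  have habv_m : 1 ≤ abv (m : K) := by
    by_contra hcon
    push_neg at hcon
    have h1 : abv ((a : K) * (m : K)) < 1 := by
      rw [abv.map_mul]
      calc abv (a : K) * abv (m : K) ≤ 1 * abv (m : K) := by
            gcongr; exact aux_int_le_one abv hna a
        _ = abv (m : K) := one_mul _
        _ < 1 := hcon
    have h2 : abv ((b : K) * (p : K)) < 1 := by
      rw [abv.map_mul, hpabs]
      have h3 : abv (b : K) * (1 / p) ≤ 1 / p :=
        mul_le_of_le_one_left (by positivity) (aux_int_le_one abv hna b)
      refine lt_of_le_of_lt h3 ?_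
      rw [div_lt_one (by positivity)]; exact hp1
    have : abv ((a : K) * (m : K) + (b : K) * (p : K)) < 1 :=
      lt_of_le_of_lt (hna _ _) (max_lt h1 h2)
    rw [habK, abv.map_one] at this
    exact lt_irrefl 1 this
  -- geometric sum
  set S : K := ∑ i ∈ Finset.range m, ζ ^ i with hS
  have hSm : S - (m : K) = ∑ i ∈ Finset.range m, (ζ ^ i - 1) := by
    rw [Finset.sum_sub_distrib, Finset.sum_const, Finset.card_range]
    simp [hS]
  have hSm_le : abv (S - (m : K)) ≤ abv (ζ - 1) := by
    rw [hSm]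
    exact aux_sum_le abv hna _ _ (abv.nonneg _)
      (fun i _ => aux_pow_sub_one abv hna hlt.le i)
  have hSne : S ≠ 0 := by
    intro h0
    have h1 : abv (m : K) ≤ abv (ζ - 1) := by
      have e : (m : K) = -(S - (m : K)) := by rw [h0]; ring
      rw [e, abv.map_neg]
      exact hSm_le
    linarith [lt_of_le_of_lt h1 hlt]
  have hgeom : S * (ζ - 1) = 0 := by
    rw [hS, geom_sum_mul, hζ, sub_self]
  rcases mul_eq_zero.mp hgeom with h | h
  · exact absurd h hSne
  · exact sub_eq_zero.mp h

/-- The `p`-th root of unity case. -/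
lemma aux_prime_case (hna : IsNonarchimedean (abv : K → ℝ)) {p : ℕ} (hp : p.Prime)
    (hpabs : abv (p : K) = 1 / p) {ζ : K} (hζ : ζ ^ p = 1)
    (hclose : abv (ζ - 1) < (p : ℝ) ^ (-(1 : ℝ) / ((p : ℝ) - 1))) : ζ = 1 := by
  have hp1 : (1 : ℝ) < p := by exact_mod_cast hp.one_lt
  have hp2 : 2 ≤ p := hp.two_le
  set r : ℝ := (p : ℝ) ^ (-(1 : ℝ) / ((p : ℝ) - 1)) with hr
  have hexp_neg : -(1 : ℝ) / ((p : ℝ) - 1) < 0 :=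
    div_neg_of_neg_of_pos (by norm_num) (by linarith)
  have hr1 : r < 1 := Real.rpow_lt_one_of_one_lt_of_neg hp1 hexp_neg
  have hrpow : r ^ (p - 1) = 1 / p := by
    rw [hr, ← Real.rpow_natCast ((p:ℝ) ^ (-(1:ℝ)/((p:ℝ)-1))) (p-1), ← Real.rpow_mul (by positivity)]
    have hcast : ((p - 1 : ℕ) : ℝ) = (p : ℝ) - 1 := by
      push_cast [Nat.cast_sub (by omega : 1 ≤ p)]; ring
    rw [hcast, div_mul_cancel₀ _ (by linarith : (p : ℝ) - 1 ≠ 0)]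
    rw [Real.rpow_neg_one]
    rw [one_div]
  by_contra hne
  have hlne : ζ - 1 ≠ 0 := sub_ne_zero.mpr hne
  have hlt1 : abv (ζ - 1) < 1 := lt_trans hclose hr1
  -- binomial expansion
  have hbin : (ζ - 1) * (∑ k ∈ Finset.range p, (ζ - 1) ^ k * (p.choose (k + 1) : K)) = 0 := by
    have h0 : ((ζ - 1) + 1) ^ p = 1 := by rw [sub_add_cancel, hζ]
    rw [add_pow] at h0
    simp only [one_pow, mul_one] at h0
    rw [Finset.sum_range_succ'] at h0
    simp only [pow_zero, Nat.choose_zero_right, Nat.cast_one, one_mul] at h0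
    have h1 : ∑ k ∈ Finset.range p, (ζ - 1) ^ (k + 1) * (p.choose (k + 1) : K) = 0 := by
      have := h0
      linear_combination this
    calc (ζ - 1) * (∑ k ∈ Finset.range p, (ζ - 1) ^ k * (p.choose (k + 1) : K))
        = ∑ k ∈ Finset.range p, (ζ - 1) ^ (k + 1) * (p.choose (k + 1) : K) := by
          rw [Finset.mul_sum]; congr 1; funext k; ring
      _ = 0 := h1
  have hsum0 : (∑ k ∈ Finset.range p, (ζ - 1) ^ k * (p.choose (k + 1) : K)) = 0 :=
    (mul_eq_zero.mp hbin).resolve_left hlne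
  -- split the sum
  have hsplit : ∑ k ∈ Finset.range p, (ζ - 1) ^ k * (p.choose (k + 1) : K)
      = (p : K) + ((∑ k ∈ Finset.Ico 1 (p - 1), (ζ - 1) ^ k * (p.choose (k + 1) : K))
        + (ζ - 1) ^ (p - 1)) := by
    rw [Finset.range_eq_Ico]
    have hp' : p = (p - 1) + 1 := by omega
    rw [hp', Finset.sum_Ico_succ_top (Nat.zero_le _), ← hp']
    rw [Finset.sum_eq_sum_Ico_succ_bot (by omega : 0 < p - 1)]
    rw [Nat.choose_self]
    simp only [pow_zero, zero_add, Nat.choose_one_right, one_mul, Nat.cast_one, mul_one]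
    ring
  rw [hsplit] at hsum0
  have hpeq : (p : K) = -((∑ k ∈ Finset.Ico 1 (p - 1), (ζ - 1) ^ k * (p.choose (k + 1) : K))
      + (ζ - 1) ^ (p - 1)) := by linear_combination hsum0
  -- bound the middle sum
  have hM : abv (∑ k ∈ Finset.Ico 1 (p - 1), (ζ - 1) ^ k * (p.choose (k + 1) : K))
      ≤ abv (ζ - 1) * (1 / p) := by
    apply aux_sum_le abv hna _ _ (by positivity)
    intro k hk
    rw [Finset.mem_Ico] at hk
    obtain ⟨c, hc⟩ := Nat.Prime.dvd_choose_self hp (by omega : k + 1 ≠ 0) (by omega : k + 1 < p)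
    rw [abv.map_mul, abv.map_pow, hc]
    push_cast
    rw [abv.map_mul, hpabs]
    have h1 : abv (ζ - 1) ^ k ≤ abv (ζ - 1) := by
      simpa using pow_le_pow_of_le_one (abv.nonneg _) hlt1.le hk.1
    have h2 : abv (c : K) ≤ 1 := aux_nat_le_one abv hna c
    calc abv (ζ - 1) ^ k * (1 / ↑p * abv (c : K))
        ≤ abv (ζ - 1) * (1 / ↑p * 1) := by
          refine mul_le_mul h1 ?_ ?_ (abv.nonneg _)
          · exact mul_le_mul_of_nonneg_left h2 (by positivity)
          · positivity
      _ = abv (ζ - 1) * (1 / p) := by ring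
  have hMlt : abv (∑ k ∈ Finset.Ico 1 (p - 1), (ζ - 1) ^ k * (p.choose (k + 1) : K)) < 1 / p := by
    refine lt_of_le_of_lt hM ?_
    calc abv (ζ - 1) * (1 / p) < 1 * (1 / p) := by gcongr
      _ = 1 / p := one_mul _
  have hlast : abv ((ζ - 1) ^ (p - 1)) < 1 / p := by
    rw [abv.map_pow, ← hrpow]
    exact pow_lt_pow_left₀ hclose (abv.nonneg _) (by omega : p - 1 ≠ 0)
  have : abv (p : K) < 1 / p := by
    rw [hpeq, abv.map_neg]
    exact lt_of_le_of_lt (hna _ _) (max_lt hMlt hlast)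
  rw [hpabs] at this
  exact lt_irrefl _ this

end Aux

theorem stmt_7 {K : Type*} [Field K] [CharZero K] (abv : AbsoluteValue K ℝ)
    (hna : IsNonarchimedean (abv : K → ℝ))
    (p : ℕ) (hp : p.Prime) (hpabs : abv (p : K) = 1 / p)
    (ζ : K) (hroot : ∃ n : ℕ, 0 < n ∧ ζ ^ n = 1)
    (hclose : abv (ζ - 1) < (p : ℝ) ^ (-(1 : ℝ) / ((p : ℝ) - 1))) :
    ζ = 1 := by
  obtain ⟨n, hn, hζn⟩ := hroot
  have hp1 : (1 : ℝ) < p := by exact_mod_cast hp.one_lt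
  have hr1 : (p : ℝ) ^ (-(1 : ℝ) / ((p : ℝ) - 1)) < 1 :=
    Real.rpow_lt_one_of_one_lt_of_neg hp1
      (div_neg_of_neg_of_pos (by norm_num) (by linarith))
  have hlt1 : abv (ζ - 1) < 1 := lt_trans hclose hr1
  -- reduce to p-power roots of unity
  have hnm : p ^ n.factorization p * (n / p ^ n.factorization p) = n :=
    Nat.ordProj_mul_ordCompl_eq_self n p
  have hmdvd : ¬ p ∣ n / p ^ n.factorization p := Nat.not_dvd_ordCompl hp hn.ne'
  have hηm : (ζ ^ p ^ n.factorization p) ^ (n / p ^ n.factorization p) = 1 := by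
    rw [← pow_mul, hnm, hζn]
  have hppow : ζ ^ p ^ n.factorization p = 1 := by
    apply aux_coprime_case abv hna hp hpabs hmdvd hηm
    exact lt_of_le_of_lt (aux_pow_sub_one abv hna hlt1.le _) hlt1
  -- downward induction on k
  have key : ∀ (k : ℕ) (x : K), abv (x - 1) < (p : ℝ) ^ (-(1 : ℝ) / ((p : ℝ) - 1)) →
      x ^ p ^ k = 1 → x = 1 := by
    intro k
    induction k with
    | zero => intro x _ h; simpa using h
    | succ k ih =>
      intro x hx hxp
      have hx1 : abv (x - 1) < 1 := lt_trans hx hr1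
      have hxi : (x ^ p ^ k) ^ p = 1 := by rw [← pow_mul, ← pow_succ, hxp]
      have h2 : x ^ p ^ k = 1 := by
        apply aux_prime_case abv hna hp hpabs hxi
        exact lt_of_le_of_lt (aux_pow_sub_one abv hna hx1.le _) hx
      exact ih x hx h2
  exact key (n.factorization p) ζ hclose hppow
end
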